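/- arXiv:1312.3546 — 2 statements merged into one kernel-verified Lean document; each statement's English description precedes it below -/
import Mathlib

section
/- Monotonicity of the increment covariance in a coefficient: fix 0 ≤ u < v ≤ s < t, an index i ∈ {1,…,N}, the other coefficients (a_j)_{j≠i}, and real numbers b, c with |b| < |c|. Write C_{u,v,s,t}(x) for the increment covariance computed with the i-th coefficient equal to x. Then C_{u,v,s,t}(b) < C_{u,v,s,t}(c) if H_i > 1/2; C_{u,v,s,t}(b) = C_{u,v,s,t}(c) if H_i = 1/2; and C_{u,v,s,t}(b) > C_{u,v,s,t}(c) if H_i < 1/2. -/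
/-
Only the `i`-th summand of `C_{u,v,s,t}` depends on `a_i`; it equals `a_i² D`, where `D` is the
increment covariance of a single sub-fractional Brownian motion of index `H_i`, so everything
reduces to the sign of `D`. With `p = 2 H_i` and `S_q(x, w) = (x + w)^q + (x - w)^q` one has
`D = -(Φ(t) - Φ(s)) / 2` for `Φ(x) = S_p(x, v) - S_p(x, u)`, whose derivative is
`p (S_{p-1}(x, v) - S_{p-1}(x, u))`. For `q < 1`, `q ≠ 0`, the map `w ↦ q S_q(x, w)` is strictly
decreasing on `[0, x)`: its derivative is `q² ((x + w)^(q-1) - (x - w)^(q-1)) < 0`. Taking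
`q = p - 1` makes `(p - 1) Φ` strictly decreasing on `[v, ∞)`, hence `(2 H_i - 1) D > 0`; for
`H_i = 1/2` all the `S_1` are linear and `D = 0`.
-/

open Real Finset

/-- The sub-fractional Brownian covariance. -/
noncomputable def subCov (H s t : ℝ) : ℝ :=
  s ^ (2 * H) + t ^ (2 * H) - (1 / 2) * ((s + t) ^ (2 * H) + |t - s| ^ (2 * H))

/-- The mixed sub-fractional covariance `C(s,t) = Σ_i a_i² c_{H_i}(s,t)`. -/
noncomputable def mixedCov (N : ℕ) (a H : Fin N → ℝ) (s t : ℝ) : ℝ :=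
  ∑ i, (a i) ^ 2 * subCov (H i) s t

/-- The covariance of increments on non-overlapping intervals. -/
noncomputable def incCov (N : ℕ) (a H : Fin N → ℝ) (u v s t : ℝ) : ℝ :=
  mixedCov N a H v t - mixedCov N a H v s - mixedCov N a H u t + mixedCov N a H u s

noncomputable def symmPowSum (q x w : ℝ) : ℝ :=
  (x + w) ^ q + (x - w) ^ q

lemma strictAntiOn_mul_symmPowSum {q : ℝ} (x : ℝ) (hq : q < 1) (hq0 : q ≠ 0) :
    StrictAntiOn (fun w => q * symmPowSum q x w) (Set.Ico 0 x) := by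
  refine strictAntiOn_of_hasDerivWithinAt_neg (convex_Ico 0 x)
    (f' := fun w => q ^ 2 * ((x + w) ^ (q - 1) - (x - w) ^ (q - 1))) ?_ ?_ ?_
  · refine ContinuousOn.mul continuousOn_const (ContinuousOn.add ?_ ?_) <;>
      refine ContinuousOn.rpow_const (by fun_prop) fun w hw => Or.inl ?_ <;>
      linarith [hw.1, hw.2]
  · intro w hw
    rw [interior_Ico] at hw
    have hplus := ((hasDerivAt_id' w).const_add x).rpow_const (p := q)
      (Or.inl (by linarith [hw.1, hw.2]))
    have hminus := ((hasDerivAt_id' w).const_sub x).rpow_const (p := q)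
      (Or.inl (by linarith [hw.2]))
    exact (((hplus.add hminus).const_mul q).congr_deriv (by ring)).hasDerivWithinAt
  · intro w hw
    rw [interior_Ico] at hw
    have hlt : (x + w) ^ (q - 1) < (x - w) ^ (q - 1) :=
      Real.rpow_lt_rpow_of_neg (by linarith [hw.2]) (by linarith [hw.1]) (by linarith)
    exact mul_neg_of_pos_of_neg (by positivity) (sub_neg.2 hlt)

lemma strictAntiOn_mul_symmPowSum_sub {p u v : ℝ} (hp0 : 0 < p) (hp2 : p < 2) (hp1 : p ≠ 1)
    (hu : 0 ≤ u) (huv : u < v) :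
    StrictAntiOn (fun x => (p - 1) * (symmPowSum p x v - symmPowSum p x u)) (Set.Ici v) := by
  have hcont (w : ℝ) : Continuous fun x => symmPowSum p x w :=
    ((continuous_add_const w).rpow_const fun _ => Or.inr hp0.le).add
      ((continuous_sub_right w).rpow_const fun _ => Or.inr hp0.le)
  have hderiv {x w : ℝ} (hw : 0 ≤ w) (hwx : w < x) :
      HasDerivAt (fun y => symmPowSum p y w) (p * symmPowSum (p - 1) x w) x := by
    have hplus := ((hasDerivAt_id' x).add_const w).rpow_const (p := p) (Or.inl (by linarith))
    have hminus := ((hasDerivAt_id' x).sub_const w).rpow_const (p := p) (Or.inl (by linarith))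
    exact (hplus.add hminus).congr_deriv (by simp only [symmPowSum]; ring)
  refine strictAntiOn_of_hasDerivWithinAt_neg (convex_Ici v)
    (f' := fun x => p * ((p - 1) * symmPowSum (p - 1) x v - (p - 1) * symmPowSum (p - 1) x u))
    ((((hcont v).sub (hcont u)).const_mul _).continuousOn) ?_ ?_
  · intro x hx
    rw [interior_Ici] at hx
    have hsub := (hderiv (hu.trans huv.le) hx).sub (hderiv hu (huv.trans hx))
    exact ((hsub.const_mul (p - 1)).congr_deriv (by ring)).hasDerivWithinAt
  · intro x hx
    rw [interior_Ici] at hx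
    have hinner := strictAntiOn_mul_symmPowSum x (q := p - 1) (by linarith) (sub_ne_zero.2 hp1)
      ⟨hu, huv.trans hx⟩ ⟨hu.trans huv.le, hx⟩ huv
    exact mul_neg_of_pos_of_neg hp0 (sub_neg.2 hinner)

noncomputable def subCovInc (h u v s t : ℝ) : ℝ :=
  subCov h v t - subCov h v s - subCov h u t + subCov h u s

lemma subCovInc_eq {h u v s t : ℝ} (huv : u ≤ v) (hvs : v ≤ s) (hst : s ≤ t) :
    subCovInc h u v s t = -(1 / 2) * ((symmPowSum (2 * h) t v - symmPowSum (2 * h) t u)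
      - (symmPowSum (2 * h) s v - symmPowSum (2 * h) s u)) := by
  simp only [subCovInc, subCov, symmPowSum, add_comm v, add_comm u,
    abs_of_nonneg (sub_nonneg.2 (hvs.trans hst)), abs_of_nonneg (sub_nonneg.2 hvs),
    abs_of_nonneg (sub_nonneg.2 (huv.trans (hvs.trans hst))),
    abs_of_nonneg (sub_nonneg.2 (huv.trans hvs))]
  ring

lemma subCovInc_half {u v s t : ℝ} (huv : u ≤ v) (hvs : v ≤ s) (hst : s ≤ t) :
    subCovInc (1 / 2) u v s t = 0 := by
  rw [subCovInc_eq huv hvs hst]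
  norm_num [symmPowSum]

lemma mul_subCovInc_pos {h u v s t : ℝ} (hh0 : 0 < h) (hh1 : h < 1) (hh : h ≠ 1 / 2)
    (hu : 0 ≤ u) (huv : u < v) (hvs : v ≤ s) (hst : s < t) :
    0 < (2 * h - 1) * subCovInc h u v s t := by
  have hanti := strictAntiOn_mul_symmPowSum_sub (p := 2 * h) (by linarith) (by linarith)
    (by contrapose! hh; linarith) hu huv (Set.mem_Ici.2 hvs) (Set.mem_Ici.2 (hvs.trans hst.le)) hst
  rw [subCovInc_eq huv.le hvs hst.le]
  linear_combination (1 / 2) * hanti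

lemma incCov_eq_sum (N : ℕ) (a H : Fin N → ℝ) (u v s t : ℝ) :
    incCov N a H u v s t = ∑ j, a j ^ 2 * subCovInc (H j) u v s t := by
  simp only [incCov, mixedCov, subCovInc, mul_add, mul_sub, sum_add_distrib, sum_sub_distrib]

lemma incCov_update_sub_incCov_update (N : ℕ) (a H : Fin N → ℝ) (u v s t : ℝ) (i : Fin N)
    (b c : ℝ) :
    incCov N (Function.update a i c) H u v s t - incCov N (Function.update a i b) H u v s t
      = (c ^ 2 - b ^ 2) * subCovInc (H i) u v s t := by
  rw [incCov_eq_sum, incCov_eq_sum, ← sum_sub_distrib, sum_eq_single i]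
  · simp only [Function.update_self]
    ring
  · intro j _ hj
    simp only [Function.update_of_ne hj, sub_self]
  · simp

/-- Monotonicity of the increment covariance in the `i`-th coefficient: with `|b| < |c|`,
`C_{u,v,s,t}(b) < C_{u,v,s,t}(c)` if `H_i > 1/2`, `=` if `H_i = 1/2`, `>` if `H_i < 1/2`,
where `C_{u,v,s,t}(x)` is computed with the `i`-th coefficient of `a` replaced by `x`. -/
theorem msfbm_increment_covariance_coeff_monotone (N : ℕ) (a H : Fin N → ℝ)
    (hH : ∀ i, H i ∈ Set.Ioo (0 : ℝ) 1)
    (u v s t : ℝ) (hu : 0 ≤ u) (huv : u < v) (hvs : v ≤ s) (hst : s < t)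
    (i : Fin N) (b c : ℝ) (hbc : |b| < |c|) :
    (1 / 2 < H i →
      incCov N (Function.update a i b) H u v s t
        < incCov N (Function.update a i c) H u v s t) ∧
    (H i = 1 / 2 →
      incCov N (Function.update a i b) H u v s t
        = incCov N (Function.update a i c) H u v s t) ∧
    (H i < 1 / 2 →
      incCov N (Function.update a i c) H u v s t
        < incCov N (Function.update a i b) H u v s t) := by
  obtain ⟨hH0, hH1⟩ := hH i
  have hsq : 0 < c ^ 2 - b ^ 2 := sub_pos.2 (sq_lt_sq.2 hbc)
  have hdiff := incCov_update_sub_incCov_update N a H u v s t i b c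
  refine ⟨fun hgt => ?_, fun heq => ?_, fun hlt => ?_⟩
  · have hD := mul_subCovInc_pos hH0 hH1 hgt.ne' hu huv hvs hst
    have hDpos : 0 < subCovInc (H i) u v s t := pos_of_mul_pos_right hD (by linarith)
    linarith [mul_pos hsq hDpos]
  · rw [heq, subCovInc_half huv.le hvs hst.le] at hdiff
    linarith
  · have hD := mul_subCovInc_pos hH0 hH1 hlt.ne hu huv hvs hst
    have hDneg : subCovInc (H i) u v s t < 0 := neg_of_mul_pos_right hD (by linarith)
    linarith [mul_neg_of_pos_of_neg hsq hDneg]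
end

section
/- Two-sided increment variance bound on a compact interval: let a ∈ ℝ^N \ {0}, let i₀ be an index with a_{i₀} ≠ 0 and H_{i₀} = min{H_i : a_i ≠ 0}, and let T > 0. Then with c₁ = a_{i₀}² γ_{i₀} and c₂ = Σ_{i=1}^N a_i² ν_i T^{2(H_i − H_{i₀})} (where γ_i = 2 − 2^{2H_i−1} if H_i > 1/2 and 1 otherwise, ν_i = 1 if H_i > 1/2 and 2 − 2^{2H_i−1} otherwise), one has 0 < c₁ ≤ c₂ < ∞ and, for all s, t ∈ [0,T], c₁ |s−t|^{2H_{i₀}} ≤ f(s,t) ≤ c₂ |s−t|^{2H_{i₀}}. -/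
open Real Finset

/-- The increment variance `f(s,t) = C(t,t) + C(s,s) − 2 C(s,t)`. -/
noncomputable def incVar (N : ℕ) (a H : Fin N → ℝ) (s t : ℝ) : ℝ :=
  mixedCov N a H t t + mixedCov N a H s s - 2 * mixedCov N a H s t

/-- `γ_i = 2 − 2^{2H_i−1}` if `H_i > 1/2`, and `1` otherwise. -/
noncomputable def gam (h : ℝ) : ℝ := if 1 / 2 < h then 2 - (2 : ℝ) ^ (2 * h - 1) else 1

/-- `ν_i = 1` if `H_i > 1/2`, and `2 − 2^{2H_i−1}` otherwise. -/
noncomputable def nu (h : ℝ) : ℝ := if 1 / 2 < h then 1 else 2 - (2 : ℝ) ^ (2 * h - 1)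

/-!
For one sub-fractional component with `p = 2H` and `0 ≤ s ≤ t`, the increment variance is
`(t-s)^p + (s+t)^p - 2^{p-1}(s^p + t^p)`. Midpoint convexity (`p ≥ 1`) or concavity (`p ≤ 1`)
of `x ↦ x^p` compares the last two terms with `0` and gives one of the two bounds. For the other
bound, fix `u = t - s` and move `s`: the derivative in `s` has the sign dictated by midpoint
concavity or convexity of `x ↦ x^{p-1}`, so the increment variance is monotone in `s` and is
compared with its value `(2 - 2^{p-1}) u^p` at `s = 0`. Summing over the components and using
`|s-t|^{2H_i} ≤ T^{2(H_i-H_{i₀})} |s-t|^{2H_{i₀}}` gives the mixed bounds.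
-/

open Set

lemma convexOn_rpow_of_nonpos {q : ℝ} (hq : q ≤ 0) : ConvexOn ℝ (Ioi 0) fun x : ℝ ↦ x ^ q := by
  have hlog : ConvexOn ℝ (Ioi 0) fun x ↦ log x * q := by
    simpa [mul_comm] using strictConcaveOn_log_Ioi.concaveOn.neg.smul (neg_nonneg.2 hq)
  refine ⟨convex_Ioi 0, fun x hx y hy a b ha hb hab => ?_⟩
  have hxy : 0 < a • x + b • y := convex_Ioi 0 hx hy ha hb hab
  simp only [rpow_def_of_pos hx, rpow_def_of_pos hy, rpow_def_of_pos hxy]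
  exact (exp_le_exp.2 (hlog.2 hx hy ha hb hab)).trans
    (convexOn_exp.2 (mem_univ _) (mem_univ _) ha hb hab)

lemma two_rpow_sub_one (p : ℝ) : (2 : ℝ) ^ (p - 1) = 2 ^ p / 2 := by
  rw [rpow_sub two_pos, rpow_one]

lemma add_rpow_eq_two_rpow_mul_midpoint (p : ℝ) {x y : ℝ} (hxy : 0 ≤ x + y) :
    (x + y) ^ p = 2 ^ (p - 1) * (2 * ((1 / 2 : ℝ) • x + (1 / 2 : ℝ) • y) ^ p) := by
  rw [two_rpow_sub_one, smul_eq_mul, smul_eq_mul, ← mul_add,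
    mul_rpow (by norm_num) hxy, one_div, inv_rpow zero_le_two]
  field_simp

lemma add_rpow_le_of_convexOn {p : ℝ} {s : Set ℝ} (hf : ConvexOn ℝ s fun x : ℝ ↦ x ^ p)
    {x y : ℝ} (hx : x ∈ s) (hy : y ∈ s) (hxy : 0 ≤ x + y) :
    (x + y) ^ p ≤ 2 ^ (p - 1) * (x ^ p + y ^ p) := by
  have hmid := hf.2 hx hy (by norm_num : (0 : ℝ) ≤ 1 / 2)
    (by norm_num : (0 : ℝ) ≤ 1 / 2) (by norm_num)
  rw [add_rpow_eq_two_rpow_mul_midpoint p hxy]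
  simp only [smul_eq_mul] at hmid ⊢
  gcongr
  linarith

lemma le_add_rpow_of_concaveOn {p : ℝ} {s : Set ℝ} (hf : ConcaveOn ℝ s fun x : ℝ ↦ x ^ p)
    {x y : ℝ} (hx : x ∈ s) (hy : y ∈ s) (hxy : 0 ≤ x + y) :
    2 ^ (p - 1) * (x ^ p + y ^ p) ≤ (x + y) ^ p := by
  have hmid := hf.2 hx hy (by norm_num : (0 : ℝ) ≤ 1 / 2)
    (by norm_num : (0 : ℝ) ≤ 1 / 2) (by norm_num)
  rw [add_rpow_eq_two_rpow_mul_midpoint p hxy]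
  simp only [smul_eq_mul] at hmid ⊢
  gcongr
  linarith

lemma rpow_le_rpow_sub_mul_rpow {d T α β : ℝ} (hd : 0 ≤ d) (hdT : d ≤ T) (hα : 0 < α)
    (hαβ : α ≤ β) : d ^ β ≤ T ^ (β - α) * d ^ α := by
  rcases hd.eq_or_lt with rfl | hd
  · rw [zero_rpow (by linarith), zero_rpow hα.ne', mul_zero]
  · calc d ^ β = d ^ (β - α) * d ^ α := by rw [← rpow_add hd, sub_add_cancel]
      _ ≤ T ^ (β - α) * d ^ α := by gcongr

noncomputable def subIncVar (h s t : ℝ) : ℝ := subCov h t t + subCov h s s - 2 * subCov h s t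

/-- `subIncVar (p / 2) a (a + u)` for `a ≥ 0`, as a function of the left endpoint `a`. -/
noncomputable def incProfile (p u a : ℝ) : ℝ :=
  u ^ p + (2 * a + u) ^ p - 2 ^ (p - 1) * (a ^ p + (a + u) ^ p)

lemma subCov_comm (h s t : ℝ) : subCov h s t = subCov h t s := by
  unfold subCov; rw [abs_sub_comm, add_comm s t]; ring

lemma subIncVar_comm (h s t : ℝ) : subIncVar h s t = subIncVar h t s := by
  unfold subIncVar; rw [subCov_comm h s t]; ring

lemma incVar_eq_sum (N : ℕ) (a H : Fin N → ℝ) (s t : ℝ) :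
    incVar N a H s t = ∑ i, (a i) ^ 2 * subIncVar (H i) s t := by
  simp only [incVar, mixedCov, subIncVar, mul_sub, mul_add, sum_sub_distrib, sum_add_distrib,
    mul_sum]
  congr 1
  exact sum_congr rfl fun i _ => by ring

lemma subIncVar_eq_incProfile {h s t : ℝ} (hh : 0 < h) (hs : 0 ≤ s) (hst : s ≤ t) :
    subIncVar h s t = incProfile (2 * h) (t - s) s := by
  have ht : 0 ≤ t := hs.trans hst
  simp only [subIncVar, subCov, incProfile, sub_self, abs_zero,
    zero_rpow (by positivity : 2 * h ≠ 0), abs_of_nonneg (sub_nonneg.2 hst), ← two_mul,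
    mul_rpow zero_le_two ht, mul_rpow zero_le_two hs, two_rpow_sub_one]
  rw [show 2 * s + (t - s) = s + t by ring, show s + (t - s) = t by ring]
  ring

lemma incProfile_zero {p : ℝ} (hp : 0 < p) (u : ℝ) :
    incProfile p u 0 = (2 - 2 ^ (p - 1)) * u ^ p := by
  simp only [incProfile, mul_zero, zero_add, zero_rpow hp.ne']
  ring

lemma continuous_incProfile {p : ℝ} (hp : 0 ≤ p) (u : ℝ) : Continuous (incProfile p u) := by
  have := continuous_rpow_const hp
  unfold incProfile
  fun_prop

lemma hasDerivAt_incProfile (p : ℝ) {u a : ℝ} (hu : 0 ≤ u) (ha : 0 < a) :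
    HasDerivAt (incProfile p u)
      (p * (2 * (2 * a + u) ^ (p - 1) - 2 ^ (p - 1) * (a ^ (p - 1) + (a + u) ^ (p - 1)))) a := by
  have hlin : HasDerivAt (fun x : ℝ ↦ 2 * x + u) 2 a := by
    simpa using ((hasDerivAt_id a).const_mul (2 : ℝ)).add_const u
  have h2 := (hlin.rpow_const (p := p) (Or.inl (by positivity))).const_add (u ^ p)
  have h3 := (hasDerivAt_rpow_const (p := p) (Or.inl ha.ne')).add
    (((hasDerivAt_id a).add_const u).rpow_const (p := p) (Or.inl (by positivity)))
  exact (h2.sub (h3.const_mul ((2 : ℝ) ^ (p - 1)))).congr_deriv (by simp only [id]; ring)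

lemma monotoneOn_incProfile {p u : ℝ} (hp1 : 1 ≤ p) (hp2 : p ≤ 2) (hu : 0 ≤ u) :
    MonotoneOn (incProfile p u) (Ici 0) := by
  refine monotoneOn_of_hasDerivWithinAt_nonneg (convex_Ici 0)
    (continuous_incProfile (by linarith) u).continuousOn
    (fun a ha ↦ (hasDerivAt_incProfile p hu (by simpa using ha)).hasDerivWithinAt)
    fun a ha ↦ ?_
  have ha : 0 < a := by simpa using ha
  have hmid := le_add_rpow_of_concaveOn (concaveOn_rpow (p := p - 1) (by linarith) (by linarith))
    (mem_Ici.2 ha.le) (mem_Ici.2 (by linarith : 0 ≤ a + u)) (by linarith)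
  rw [show a + (a + u) = 2 * a + u by ring, two_rpow_sub_one (p - 1)] at hmid
  exact mul_nonneg (by linarith) (by linarith)

lemma antitoneOn_incProfile {p u : ℝ} (hp0 : 0 ≤ p) (hp1 : p ≤ 1) (hu : 0 ≤ u) :
    AntitoneOn (incProfile p u) (Ici 0) := by
  refine antitoneOn_of_hasDerivWithinAt_nonpos (convex_Ici 0)
    (continuous_incProfile hp0 u).continuousOn
    (fun a ha ↦ (hasDerivAt_incProfile p hu (by simpa using ha)).hasDerivWithinAt)
    fun a ha ↦ ?_
  have ha : 0 < a := by simpa using ha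
  have hmid := add_rpow_le_of_convexOn (convexOn_rpow_of_nonpos (q := p - 1) (by linarith))
    (mem_Ioi.2 ha) (mem_Ioi.2 (by linarith : 0 < a + u)) (by linarith)
  rw [show a + (a + u) = 2 * a + u by ring, two_rpow_sub_one (p - 1)] at hmid
  exact mul_nonpos_of_nonneg_of_nonpos (by linarith) (by linarith)

lemma gam_pos {h : ℝ} (h1 : h < 1) : 0 < gam h := by
  unfold gam
  split_ifs
  · have : (2 : ℝ) ^ (2 * h - 1) < 2 ^ (1 : ℝ) :=
      rpow_lt_rpow_of_exponent_lt one_lt_two (by linarith)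
    rw [rpow_one] at this
    linarith
  · exact one_pos

lemma gam_le_nu (h : ℝ) : gam h ≤ nu h := by
  unfold gam nu
  split_ifs with hh
  · linarith [one_le_rpow one_le_two (by linarith : 0 ≤ 2 * h - 1)]
  · linarith [rpow_le_one_of_one_le_of_nonpos one_le_two
      (by linarith [not_lt.1 hh] : 2 * h - 1 ≤ 0)]

lemma nu_pos {h : ℝ} (h1 : h < 1) : 0 < nu h := (gam_pos h1).trans_le (gam_le_nu h)

lemma subIncVar_bounds_of_le {h s t : ℝ} (h0 : 0 < h) (h1 : h < 1) (hs : 0 ≤ s) (hst : s ≤ t) :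
    gam h * (t - s) ^ (2 * h) ≤ subIncVar h s t ∧ subIncVar h s t ≤ nu h * (t - s) ^ (2 * h) := by
  have ht : 0 ≤ t := hs.trans hst
  have hu : 0 ≤ t - s := sub_nonneg.2 hst
  have hprofile : incProfile (2 * h) (t - s) s = (t - s) ^ (2 * h) +
      ((s + t) ^ (2 * h) - 2 ^ (2 * h - 1) * (s ^ (2 * h) + t ^ (2 * h))) := by
    rw [incProfile, show 2 * s + (t - s) = s + t by ring, show s + (t - s) = t by ring]
    ring
  have hs_zero := incProfile_zero (by positivity : 0 < 2 * h) (t - s)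
  rw [subIncVar_eq_incProfile h0 hs hst]
  unfold gam nu
  split_ifs with hh
  · have hmono := monotoneOn_incProfile (p := 2 * h) (by linarith) (by linarith) hu
      self_mem_Ici (mem_Ici.2 hs) hs
    have hconv := add_rpow_le_of_convexOn (convexOn_rpow (p := 2 * h) (by linarith))
      (mem_Ici.2 hs) (mem_Ici.2 ht) (by linarith)
    constructor <;> linarith
  · have hanti := antitoneOn_incProfile (p := 2 * h) (by linarith) (by linarith) hu
      self_mem_Ici (mem_Ici.2 hs) hs
    have hconc := le_add_rpow_of_concaveOn (concaveOn_rpow (p := 2 * h) (by linarith) (by linarith))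
      (mem_Ici.2 hs) (mem_Ici.2 ht) (by linarith)
    constructor <;> linarith

lemma subIncVar_bounds {h s t : ℝ} (h0 : 0 < h) (h1 : h < 1) (hs : 0 ≤ s) (ht : 0 ≤ t) :
    gam h * |s - t| ^ (2 * h) ≤ subIncVar h s t ∧ subIncVar h s t ≤ nu h * |s - t| ^ (2 * h) := by
  wlog hst : s ≤ t generalizing s t
  · rw [abs_sub_comm, subIncVar_comm]
    exact this ht hs (le_of_not_ge hst)
  rw [abs_sub_comm, abs_of_nonneg (sub_nonneg.2 hst)]
  exact subIncVar_bounds_of_le h0 h1 hs hst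

section Mixed

variable {N : ℕ} {a H : Fin N → ℝ}

lemma le_incVar (hH : ∀ i, H i ∈ Set.Ioo 0 1) (i₀ : Fin N) {s t : ℝ} (hs : 0 ≤ s) (ht : 0 ≤ t) :
    (a i₀) ^ 2 * gam (H i₀) * |s - t| ^ (2 * H i₀) ≤ incVar N a H s t := by
  have hb i := subIncVar_bounds (hH i).1 (hH i).2 hs ht
  have hterm i : 0 ≤ (a i) ^ 2 * subIncVar (H i) s t :=
    mul_nonneg (sq_nonneg _) ((mul_nonneg (gam_pos (hH i).2).le (by positivity)).trans (hb i).1)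
  calc (a i₀) ^ 2 * gam (H i₀) * |s - t| ^ (2 * H i₀) ≤ (a i₀) ^ 2 * subIncVar (H i₀) s t := by
        rw [mul_assoc]; gcongr; exact (hb i₀).1
    _ ≤ ∑ i, (a i) ^ 2 * subIncVar (H i) s t :=
        Finset.single_le_sum (fun i _ ↦ hterm i) (Finset.mem_univ i₀)
    _ = incVar N a H s t := (incVar_eq_sum N a H s t).symm

lemma incVar_le (hH : ∀ i, H i ∈ Set.Ioo 0 1) {i₀ : Fin N} (hmin : ∀ i, a i ≠ 0 → H i₀ ≤ H i)
    {T s t : ℝ} (hs : s ∈ Set.Icc 0 T) (ht : t ∈ Set.Icc 0 T) :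
    incVar N a H s t ≤
      (∑ i, (a i) ^ 2 * nu (H i) * T ^ (2 * (H i - H i₀))) * |s - t| ^ (2 * H i₀) := by
  have hdist : |s - t| ≤ T := abs_sub_le_of_nonneg_of_le hs.1 hs.2 ht.1 ht.2
  rw [incVar_eq_sum, sum_mul]
  refine Finset.sum_le_sum fun i _ ↦ ?_
  by_cases hai : a i = 0
  · simp [hai]
  have hnu := nu_pos (hH i).2
  calc (a i) ^ 2 * subIncVar (H i) s t ≤ (a i) ^ 2 * (nu (H i) * |s - t| ^ (2 * H i)) := by
        gcongr; exact (subIncVar_bounds (hH i).1 (hH i).2 hs.1 ht.1).2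
    _ ≤ (a i) ^ 2 * (nu (H i) * (T ^ (2 * (H i - H i₀)) * |s - t| ^ (2 * H i₀))) := by
        rw [mul_sub]
        gcongr
        exact rpow_le_rpow_sub_mul_rpow (abs_nonneg _) hdist (by linarith [(hH i₀).1])
          (by linarith [hmin i hai])
    _ = (a i) ^ 2 * nu (H i) * T ^ (2 * (H i - H i₀)) * |s - t| ^ (2 * H i₀) := by ring

lemma sq_mul_gam_le_sum_sq_mul_nu (hH : ∀ i, H i < 1) (i₀ : Fin N) {T : ℝ} (hT : 0 ≤ T) :
    (a i₀) ^ 2 * gam (H i₀) ≤ ∑ i, (a i) ^ 2 * nu (H i) * T ^ (2 * (H i - H i₀)) := by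
  have hsum := Finset.single_le_sum (f := fun i ↦ (a i) ^ 2 * nu (H i) * T ^ (2 * (H i - H i₀)))
    (fun i _ ↦ by have := nu_pos (hH i); positivity) (Finset.mem_univ i₀)
  beta_reduce at hsum
  rw [sub_self, mul_zero, rpow_zero, mul_one] at hsum
  exact (mul_le_mul_of_nonneg_left (gam_le_nu _) (sq_nonneg _)).trans hsum

end Mixed

theorem msfbm_increment_variance_two_sided_general (N : ℕ) (a H : Fin N → ℝ)
    (hH : ∀ i, H i ∈ Set.Ioo (0 : ℝ) 1)
    (i₀ : Fin N) (hai₀ : a i₀ ≠ 0) (hmin : ∀ i, a i ≠ 0 → H i₀ ≤ H i)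
    (T : ℝ) (hT : 0 < T) :
    0 < (a i₀) ^ 2 * gam (H i₀) ∧
    (a i₀) ^ 2 * gam (H i₀) ≤ ∑ i, (a i) ^ 2 * nu (H i) * T ^ (2 * (H i - H i₀)) ∧
    ∀ s ∈ Set.Icc (0 : ℝ) T, ∀ t ∈ Set.Icc (0 : ℝ) T,
      (a i₀) ^ 2 * gam (H i₀) * |s - t| ^ (2 * H i₀) ≤ incVar N a H s t ∧
      incVar N a H s t ≤
        (∑ i, (a i) ^ 2 * nu (H i) * T ^ (2 * (H i - H i₀))) * |s - t| ^ (2 * H i₀) :=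
  ⟨mul_pos (by positivity) (gam_pos (hH i₀).2),
    sq_mul_gam_le_sum_sq_mul_nu (fun i ↦ (hH i).2) i₀ hT.le,
    fun _ hs _ ht ↦ ⟨le_incVar hH i₀ hs.1 ht.1, incVar_le hH hmin hs ht⟩⟩

/-- Two-sided increment variance bound on `[0,T]`: with `c₁ = a_{i₀}² γ_{i₀}` and
`c₂ = Σ_i a_i² ν_i T^{2(H_i−H_{i₀})}`, one has `0 < c₁ ≤ c₂` and
`c₁ |s−t|^{2H_{i₀}} ≤ f(s,t) ≤ c₂ |s−t|^{2H_{i₀}}` for all `s, t ∈ [0,T]`. -/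
theorem msfbm_increment_variance_two_sided (N : ℕ) (a H : Fin N → ℝ)
    (hH : ∀ i, H i ∈ Set.Ioo (0 : ℝ) 1) (ha : a ≠ 0)
    (i₀ : Fin N) (hai₀ : a i₀ ≠ 0) (hmin : ∀ i, a i ≠ 0 → H i₀ ≤ H i)
    (T : ℝ) (hT : 0 < T) :
    0 < (a i₀) ^ 2 * gam (H i₀) ∧
    (a i₀) ^ 2 * gam (H i₀) ≤ ∑ i, (a i) ^ 2 * nu (H i) * T ^ (2 * (H i - H i₀)) ∧
    ∀ s ∈ Set.Icc (0 : ℝ) T, ∀ t ∈ Set.Icc (0 : ℝ) T,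
      (a i₀) ^ 2 * gam (H i₀) * |s - t| ^ (2 * H i₀) ≤ incVar N a H s t ∧
      incVar N a H s t ≤
        (∑ i, (a i) ^ 2 * nu (H i) * T ^ (2 * (H i - H i₀))) * |s - t| ^ (2 * H i₀) :=
  msfbm_increment_variance_two_sided_general N a H hH i₀ hai₀ hmin T hT
end
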